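/- arXiv:2307.08998 — 3 statements merged into one kernel-verified Lean document; each statement's English description precedes it below -/
import Mathlib

section
/- For all i ≥ 0 and k ≥ 2, P_{2i+3}(u)·P_k(u) − u·P_{2i+k+1}(u) = P_{2i+1}(u)·P_{k-2}(u). -/
def pell (u : ℕ) : ℕ → ℕ
  | 0 => 0
  | 1 => 1
  | n + 2 => u * pell u (n + 1) + pell u n

theorem pell_add_two (u n : ℕ) : pell u (n + 2) = u * pell u (n + 1) + pell u n := rfl

theorem pell_add_add_one (u m n : ℕ) :
    pell u (m + n + 1) = pell u (m + 1) * pell u (n + 1) + pell u m * pell u n := by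
  induction n using Nat.twoStepInduction with
  | zero => simp [pell]
  | one => simp [pell]; ring
  | more n ih ih' =>
    rw [show m + (n + 2) + 1 = m + n + 1 + 2 by ring, pell_add_two, ih,
      show m + n + 1 + 1 = m + (n + 1) + 1 by ring, ih', pell_add_two u (n + 1), pell_add_two u n]
    ring

theorem pell_mul_pell_sub_pell (u a j : ℕ) :
    (pell u (a + 2) * pell u (j + 2) : ℤ) - u * pell u (a + j + 2) = pell u a * pell u j := by
  rw [show a + j + 2 = a + 1 + j + 1 by ring, pell_add_add_one u (a + 1), pell_add_two u j,
    pell_add_two u a]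
  push_cast
  ring

theorem stmt_5_general (u : ℕ) (i k : ℕ) (hk : 2 ≤ k) :
    (pell u (2 * i + 3) * pell u k : ℤ) - u * pell u (2 * i + k + 1) =
      pell u (2 * i + 1) * pell u (k - 2) := by
  obtain ⟨j, rfl⟩ := Nat.exists_eq_add_of_le' hk
  rw [show 2 * i + (j + 2) + 1 = 2 * i + 1 + j + 2 by ring, Nat.add_sub_cancel]
  exact pell_mul_pell_sub_pell u (2 * i + 1) j

theorem stmt_5 (u : ℕ) (hu : 1 ≤ u) (i k : ℕ) (hk : 2 ≤ k) :
    (pell u (2 * i + 3) * pell u k : ℤ) - u * pell u (2 * i + k + 1) =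
      pell u (2 * i + 1) * pell u (k - 2) :=
  stmt_5_general u i k hk
end

section
/- Let u ≥ 2 and 2 ≤ i ≤ k. For integers ℓ, ℓ' with 0 ≤ ℓ, ℓ' < P_{2i}(u)/u and any fixed z, if ℓ·P_{2i+2}(u) + z·P_{2i+2k+1}(u) ≡ ℓ'·P_{2i+2}(u) + z·P_{2i+2k+1}(u) (mod P_{2i}(u)), then ℓ = ℓ'. -/
/-!
Modulo `m = P_{2i}` one has `P_{2i+2} ≡ u P_{2i-1}`, so after cancelling the `z`-terms the
hypothesis reads `ℓ u P_{2i-1} ≡ ℓ' u P_{2i-1} (mod m)`. Since `u ∣ m` and `P_{2i-1}` is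
coprime to `m`, we have `gcd(m, u P_{2i-1}) = u`, hence `ℓ ≡ ℓ' (mod m / u)`, and both
residues lie below `m / u`.
-/

lemma pell_coprime_succ (u : ℕ) : ∀ n, Nat.Coprime (pell u n) (pell u (n + 1))
  | 0 => by simp [pell]
  | n + 1 => by
      show Nat.Coprime (pell u (n + 1)) (u * pell u (n + 1) + pell u n)
      rw [show u * pell u (n + 1) + pell u n = pell u n + pell u (n + 1) * u by ring,
        Nat.coprime_add_mul_left_right]
      exact (pell_coprime_succ u n).symm

lemma dvd_pell_two_mul (u : ℕ) : ∀ i, u ∣ pell u (2 * i)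
  | 0 => by simp [pell]
  | i + 1 => by
      rw [show 2 * (i + 1) = 2 * i + 2 by ring, pell]
      exact (dvd_mul_right u _).add (dvd_pell_two_mul u i)

lemma pell_add_three_modEq (u n : ℕ) :
    pell u (n + 3) ≡ u * pell u n [MOD pell u (n + 1)] := by
  have h : pell u (n + 3) = u * pell u n + pell u (n + 1) * (u * u + 1) := by
    simp only [pell]
    ring
  rw [h]
  exact Nat.add_mul_mod_self_left _ _ _

lemma gcd_pell_succ_mul_pell (u n : ℕ) (h : u ∣ pell u (n + 1)) :
    (pell u (n + 1)).gcd (u * pell u n) = u := by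
  rw [Nat.gcd_comm, Nat.Coprime.gcd_mul_right_cancel u (pell_coprime_succ u n), Nat.gcd_eq_left h]

theorem stmt_10_general (u : ℕ) (i k : ℕ)
    (l l' z : ℕ) (hl : l < pell u (2 * i) / u) (hl' : l' < pell u (2 * i) / u)
    (hcong : l * pell u (2 * i + 2) + z * pell u (2 * i + 2 * k + 1) ≡
      l' * pell u (2 * i + 2) + z * pell u (2 * i + 2 * k + 1) [MOD pell u (2 * i)]) :
    l = l' := by
  have hm : 0 < pell u (2 * i) := by
    have := Nat.div_le_self (pell u (2 * i)) u
    omega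
  obtain ⟨j, rfl⟩ : ∃ j, i = j + 1 :=
    Nat.exists_eq_succ_of_ne_zero (by rintro rfl; simp [pell] at hm)
  have hdvd := dvd_pell_two_mul u (j + 1)
  rw [show 2 * (j + 1) = 2 * j + 1 + 1 by ring] at hl hl' hm hdvd
  have hcong' : l * pell u (2 * j + 1 + 3) ≡ l' * pell u (2 * j + 1 + 3)
      [MOD pell u (2 * j + 1 + 1)] :=
    Nat.ModEq.add_right_cancel' _ hcong
  have hmul : l * (u * pell u (2 * j + 1)) ≡ l' * (u * pell u (2 * j + 1))
      [MOD pell u (2 * j + 1 + 1)] :=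
    ((pell_add_three_modEq u _).mul_left l).symm.trans
      (hcong'.trans ((pell_add_three_modEq u _).mul_left l'))
  have hmod := Nat.ModEq.cancel_right_div_gcd hm hmul
  rw [gcd_pell_succ_mul_pell u _ hdvd] at hmod
  exact hmod.eq_of_lt_of_lt hl hl'

theorem stmt_10 (u : ℕ) (hu : 2 ≤ u) (i k : ℕ) (hi : 2 ≤ i) (hik : i ≤ k)
    (l l' z : ℕ) (hl : l < pell u (2 * i) / u) (hl' : l' < pell u (2 * i) / u)
    (hcong : l * pell u (2 * i + 2) + z * pell u (2 * i + 2 * k + 1) ≡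
      l' * pell u (2 * i + 2) + z * pell u (2 * i + 2 * k + 1) [MOD pell u (2 * i)]) :
    l = l' :=
  stmt_10_general u i k l l' z hl hl' hcong
end

section
/- Let u ≥ 2 and 2 ≤ i ≤ k. The set {y·P_{2i+2}(u) + z·P_{2i+2k+1}(u) : 0 ≤ y < P_{2i}(u)/u, 0 ≤ z < u} forms a complete residue system modulo P_{2i}(u). -/
theorem Finset.existsUnique_of_injOn_of_card_eq {α : Type*} {s : Finset α} {N : ℕ} (f : α → ℕ)
    (hf : ∀ a ∈ s, f a < N) (hinj : Set.InjOn f s) (hcard : s.card = N) :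
    ∀ m < N, ∃! a, a ∈ s ∧ f a = m := by
  intro m hm
  obtain ⟨a, ha, rfl⟩ := Finset.surj_on_of_inj_on_of_card_le (t := Finset.range N)
    (fun a _ => f a) (fun a ha => Finset.mem_range.2 (hf a ha))
    (fun _ _ ha₁ ha₂ h => hinj ha₁ ha₂ h) (by simpa using hcard.ge) m (Finset.mem_range.2 hm)
  exact ⟨a, ⟨ha, rfl⟩, fun b ⟨hb, hfb⟩ => hinj hb ha hfb⟩

namespace pell

variable (u : ℕ)

theorem add_two (n : ℕ) : pell u (n + 2) = u * pell u (n + 1) + pell u n := rfl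

theorem dvd_two_mul (n : ℕ) : u ∣ pell u (2 * n) := by
  induction n with
  | zero => simp [pell]
  | succ n ih =>
    rw [Nat.mul_succ, add_two]
    exact dvd_add (dvd_mul_right u _) ih

theorem two_mul_add_one_modEq_one (n : ℕ) : pell u (2 * n + 1) ≡ 1 [MOD u] := by
  induction n with
  | zero => simp [pell, Nat.ModEq.refl]
  | succ n ih =>
    rw [show 2 * (n + 1) + 1 = 2 * n + 1 + 2 by ring, add_two]
    unfold Nat.ModEq at ih ⊢
    rwa [Nat.mul_add_mod]

theorem coprime_succ (n : ℕ) : Nat.Coprime (pell u (n + 1)) (pell u n) := by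
  induction n with
  | zero => simp [pell]
  | succ n ih => exact (Nat.coprime_mul_right_add_left _ _ u).2 ih.symm

end pell

theorem eq_and_eq_of_mul_add_mul_modEq {n u A B P y z y' z' : ℕ}
    (hA : A ≡ u * P [MOD n * u]) (hP : Nat.Coprime P (n * u)) (hB : B ≡ 1 [MOD u])
    (hy : y < n) (hy' : y' < n) (hz : z < u) (hz' : z' < u)
    (h : y * A + z * B ≡ y' * A + z' * B [MOD n * u]) : y = y' ∧ z = z' := by
  have hAu : A ≡ 0 [MOD u] :=
    (hA.of_mul_left n).trans (Nat.modEq_zero_iff_dvd.2 (dvd_mul_right u P))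
  have reduce (a b : ℕ) : a * A + b * B ≡ b [MOD u] := by
    simpa using (hAu.mul_left a).add (hB.mul_left b)
  obtain rfl : z = z' :=
    ((reduce y z).symm.trans ((h.of_mul_left n).trans (reduce y' z'))).eq_of_lt_of_lt hz hz'
  have hyuP : y * u * P ≡ y' * u * P [MOD n * u] := by
    simpa only [mul_assoc] using
      (hA.mul_left y).symm.trans ((h.add_right_cancel' _).trans (hA.mul_left y'))
  have hyy : y ≡ y' [MOD n] :=
    (hyuP.cancel_right_of_coprime hP.symm).mul_right_cancel' (by omega)
  exact ⟨hyy.eq_of_lt_of_lt hy hy', rfl⟩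

theorem stmt_11_general (u : ℕ) (i k : ℕ) :
    ∀ m : ℕ, m < pell u (2 * i) →
      ∃! yz : ℕ × ℕ, yz.1 < pell u (2 * i) / u ∧ yz.2 < u ∧
        (yz.1 * pell u (2 * i + 2) + yz.2 * pell u (2 * i + 2 * k + 1)) % pell u (2 * i) = m := by
  intro m hm
  set N := pell u (2 * i)
  set n := N / u
  have hN : n * u = N := Nat.div_mul_cancel (pell.dvd_two_mul u i)
  have hA : pell u (2 * i + 2) ≡ u * pell u (2 * i + 1) [MOD n * u] := by
    rw [hN, pell.add_two]
    exact Nat.add_modEq_right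
  have hP : Nat.Coprime (pell u (2 * i + 1)) (n * u) := hN ▸ pell.coprime_succ u (2 * i)
  have hB : pell u (2 * i + 2 * k + 1) ≡ 1 [MOD u] := by
    simpa only [mul_add] using pell.two_mul_add_one_modEq_one u (i + k)
  have key := Finset.existsUnique_of_injOn_of_card_eq (s := Finset.range n ×ˢ Finset.range u)
    (fun yz => (yz.1 * pell u (2 * i + 2) + yz.2 * pell u (2 * i + 2 * k + 1)) % N)
    (fun _ _ => Nat.mod_lt _ (by omega))
    (fun p hp q hq hpq => by
      simp only [Finset.coe_product, Finset.coe_range, Set.mem_prod, Set.mem_Iio] at hp hq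
      rw [← hN] at hpq
      obtain ⟨h1, h2⟩ := eq_and_eq_of_mul_add_mul_modEq hA hP hB hp.1 hq.1 hp.2 hq.2 hpq
      exact Prod.ext h1 h2)
    (by rw [Finset.card_product, Finset.card_range, Finset.card_range, hN]) m hm
  simpa only [Finset.mem_product, Finset.mem_range, and_assoc] using key

theorem stmt_11 (u : ℕ) (hu : 2 ≤ u) (i k : ℕ) (hi : 2 ≤ i) (hik : i ≤ k) :
    ∀ m : ℕ, m < pell u (2 * i) →
      ∃! yz : ℕ × ℕ, yz.1 < pell u (2 * i) / u ∧ yz.2 < u ∧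
        (yz.1 * pell u (2 * i + 2) + yz.2 * pell u (2 * i + 2 * k + 1)) % pell u (2 * i) = m :=
  stmt_11_general u i k
end
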